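/- Let γ' ∈ (0,1), H(1 − √γ') ≥ 1, let τ ≥ 0 be an integer and t₀ ≥ max(2H, 1) a real, set α_l = H/(l + t₀), and define β̃_{h,t} = α_h ∏_{l=h+1}^{t}(1 − α_l) (empty product equal to 1). Let C, C' ≥ 0 and let (ξ_h) be nonnegative reals satisfying ξ_h ≤ C/√(h + t₀) + C'/(h + t₀) for all τ ≤ h ≤ t. Then γ' ∑_{h=τ}^{t} β̃_{h,t} ξ_h ≤ √γ' · ( C/√(t + 1 + t₀) + C'/(t + 1 + t₀) ). -/

import Mathlib

/-!
The sums `S_t = ∑_{h=τ}^{t} β̃_{h,t} x_h` obey `S_t = (1 - α_t) S_{t-1} + α_t x_t` with `S_{τ-1} = 0`,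
so any sequence `c` with `(1 - α_t) c_t + α_t x_t ≤ c_{t+1}` dominates them: `S_t ≤ c_{t+1}`.
For `x_h = κ (h + t₀)^{-p}` and `c_t = (t + t₀)^{-p}` this supersolution inequality reduces,
because `α_t (1 - κ) ≥ 1/(t + t₀)` when `H (1 - κ) ≥ 1`, to `(1 - 1/a) a^{-p} ≤ (a + 1)^{-p}`, which holds
for `p ≤ 1`. Applying this with `κ = √γ'` and `p = 1/2, 1` and using `γ' = κ · κ` gives the theorem.
-/

open Finset

section RecursionWeight

variable {R : Type*} [CommRing R]

/-- The paper's `β̃_{h,t}` for the step sizes `α`. -/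
def recursionWeight (α : ℕ → R) (h t : ℕ) : R :=
  α h * ∏ l ∈ Icc (h + 1) t, (1 - α l)

@[simp]
lemma recursionWeight_self (α : ℕ → R) (t : ℕ) : recursionWeight α t t = α t := by
  simp [recursionWeight]

lemma recursionWeight_succ (α : ℕ → R) {h t : ℕ} (hht : h ≤ t) :
    recursionWeight α h (t + 1) = recursionWeight α h t * (1 - α (t + 1)) := by
  rw [recursionWeight, recursionWeight, prod_Icc_succ_top (by omega), mul_assoc]

lemma sum_recursionWeight_mul_succ (α x : ℕ → R) {τ t : ℕ} (hτt : τ ≤ t + 1) :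
    ∑ h ∈ Icc τ (t + 1), recursionWeight α h (t + 1) * x h =
      (1 - α (t + 1)) * ∑ h ∈ Icc τ t, recursionWeight α h t * x h + α (t + 1) * x (t + 1) := by
  rw [sum_Icc_succ_top hτt, recursionWeight_self, mul_sum]
  congr 1
  refine sum_congr rfl fun h hh => ?_
  rw [recursionWeight_succ α (mem_Icc.mp hh).2]
  ring

end RecursionWeight

section Ordered

variable {R : Type*} [CommRing R] [LinearOrder R] [IsStrictOrderedRing R]

lemma recursionWeight_nonneg {α : ℕ → R} (hα₀ : ∀ l, 0 ≤ α l) (hα₁ : ∀ l, α l ≤ 1) (h t : ℕ) :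
    0 ≤ recursionWeight α h t :=
  mul_nonneg (hα₀ h) (prod_nonneg fun l _ => sub_nonneg.mpr (hα₁ l))

theorem sum_recursionWeight_mul_le {α x c : ℕ → R} {τ : ℕ} (hα : ∀ t, α t ≤ 1) (hc : 0 ≤ c τ)
    (hstep : ∀ t, τ ≤ t → (1 - α t) * c t + α t * x t ≤ c (t + 1)) {t : ℕ} (hτt : τ ≤ t) :
    ∑ h ∈ Icc τ t, recursionWeight α h t * x h ≤ c (t + 1) := by
  induction t, hτt using Nat.le_induction with
  | base =>
    rw [Icc_self, sum_singleton, recursionWeight_self]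
    exact (le_add_of_nonneg_left (mul_nonneg (sub_nonneg.mpr (hα τ)) hc)).trans (hstep τ le_rfl)
  | succ t hτt ih =>
    rw [sum_recursionWeight_mul_succ α x (by omega)]
    calc (1 - α (t + 1)) * ∑ h ∈ Icc τ t, recursionWeight α h t * x h + α (t + 1) * x (t + 1)
        ≤ (1 - α (t + 1)) * c (t + 1) + α (t + 1) * x (t + 1) := by
          gcongr
          exact sub_nonneg.mpr (hα _)
      _ ≤ c (t + 1 + 1) := hstep (t + 1) (by omega)

end Ordered

lemma one_sub_inv_mul_rpow_neg_le {a p : ℝ} (ha : 0 < a) (hp : p ≤ 1) :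
    (1 - a⁻¹) * a ^ (-p) ≤ (a + 1) ^ (-p) := by
  have ha₁ : 0 < a + 1 := by linarith
  have hfrac₀ : 0 ≤ a / (a + 1) := by positivity
  have hfrac₁ : a / (a + 1) ≤ 1 := (div_le_one ha₁).mpr (by linarith)
  have hle : 1 - a⁻¹ ≤ a / (a + 1) :=
    calc 1 - a⁻¹ ≤ 1 - (a + 1)⁻¹ := by gcongr; linarith
      _ = a / (a + 1) := by field_simp; ring
  calc (1 - a⁻¹) * a ^ (-p) ≤ (a / (a + 1)) ^ p * a⁻¹ ^ p := by
        rw [Real.inv_rpow ha.le, ← Real.rpow_neg ha.le]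
        gcongr
        exact hle.trans (Real.self_le_rpow_of_le_one hfrac₀ hfrac₁ hp)
    _ = (a + 1) ^ (-p) := by
        rw [← Real.mul_rpow hfrac₀ (inv_nonneg.mpr ha.le), Real.rpow_neg ha₁.le, ← Real.inv_rpow ha₁.le]
        congr 1
        field_simp

lemma div_add_le_one {H t₀ : ℝ} (ht₀ : 0 < t₀) (hHt₀ : H ≤ t₀) (l : ℕ) : H / ((l : ℝ) + t₀) ≤ 1 :=
  div_le_one_of_le₀ (hHt₀.trans (le_add_of_nonneg_left l.cast_nonneg)) (by positivity)

lemma div_sqrt_add_div_eq {a : ℝ} (ha : 0 ≤ a) (C C' : ℝ) :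
    C / √a + C' / a = C * a ^ (-(1 / 2 : ℝ)) + C' * a ^ (-1 : ℝ) := by
  rw [Real.rpow_neg ha, ← Real.sqrt_eq_rpow, Real.rpow_neg_one, div_eq_mul_inv, div_eq_mul_inv]

theorem mul_sum_recursionWeight_rpow_le {H t₀ κ p : ℝ} (hH : 1 ≤ H * (1 - κ)) (ht₀ : 0 < t₀)
    (hHt₀ : H ≤ t₀) (hp : p ≤ 1) {τ t : ℕ} (hτt : τ ≤ t) :
    κ * ∑ h ∈ Icc τ t, recursionWeight (fun l : ℕ => H / ((l : ℝ) + t₀)) h t * ((h : ℝ) + t₀) ^ (-p)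
      ≤ ((t : ℝ) + 1 + t₀) ^ (-p) := by
  have hpos : ∀ l : ℕ, 0 < (l : ℝ) + t₀ := fun l => by positivity
  have hstep : ∀ l : ℕ, τ ≤ l →
      (1 - H / ((l : ℝ) + t₀)) * ((l : ℝ) + t₀) ^ (-p) + H / ((l : ℝ) + t₀) * (κ * ((l : ℝ) + t₀) ^ (-p))
        ≤ (((l + 1 : ℕ) : ℝ) + t₀) ^ (-p) := by
    intro l _
    set a : ℝ := (l : ℝ) + t₀
    have ha : 0 < a := hpos l
    have hgain : a⁻¹ ≤ H * (1 - κ) / a := by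
      rw [inv_eq_one_div]
      exact div_le_div_of_nonneg_right hH ha.le
    calc (1 - H / a) * a ^ (-p) + H / a * (κ * a ^ (-p)) = (1 - H * (1 - κ) / a) * a ^ (-p) := by ring
      _ ≤ (1 - a⁻¹) * a ^ (-p) := by gcongr
      _ ≤ (a + 1) ^ (-p) := one_sub_inv_mul_rpow_neg_le ha hp
      _ = (((l + 1 : ℕ) : ℝ) + t₀) ^ (-p) := by push_cast [a]; ring_nf
  rw [mul_sum]
  simpa only [mul_left_comm κ, Nat.cast_add, Nat.cast_one] using
    sum_recursionWeight_mul_le (div_add_le_one ht₀ hHt₀) (Real.rpow_nonneg (hpos τ).le _) hstep hτt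

theorem stmt_12_general (γ' H t₀ C C' : ℝ) (τ : ℕ)
    (hγ' : γ' ∈ Set.Ioo (0 : ℝ) 1)
    (hH : 1 ≤ H * (1 - Real.sqrt γ'))
    (ht₀ : max (2 * H) 1 ≤ t₀)
    (hC : 0 ≤ C) (hC' : 0 ≤ C')
    (t : ℕ) (ht : τ ≤ t)
    (ξ : ℕ → ℝ)
    (hξ : ∀ h, τ ≤ h → h ≤ t →
      ξ h ≤ C / Real.sqrt ((h : ℝ) + t₀) + C' / ((h : ℝ) + t₀)) :
    γ' * ∑ h ∈ Finset.Icc τ t,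
        ((H / ((h : ℝ) + t₀)) * ∏ l ∈ Finset.Icc (h + 1) t, (1 - H / ((l : ℝ) + t₀))) * ξ h ≤
      Real.sqrt γ' *
        (C / Real.sqrt ((t : ℝ) + 1 + t₀) + C' / ((t : ℝ) + 1 + t₀)) := by
  obtain ⟨hγ₀, hγ₁⟩ := hγ'
  set κ := √γ'
  have hκ₁ : κ < 1 := (Real.sqrt_lt' one_pos).mpr (by simpa using hγ₁)
  have hH₀ : 0 < H := pos_of_mul_pos_left (one_pos.trans_le hH) (by linarith)
  have hHt₀ : H ≤ t₀ := by linarith [le_of_max_le_left ht₀]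
  have ht₀₀ : 0 < t₀ := hH₀.trans_le hHt₀
  set α : ℕ → ℝ := fun l => H / ((l : ℝ) + t₀)
  have hβ : ∀ h t, 0 ≤ recursionWeight α h t :=
    recursionWeight_nonneg (α := α) (fun l => div_nonneg hH₀.le (by positivity))
      (div_add_le_one ht₀₀ hHt₀)
  change γ' * ∑ h ∈ Icc τ t, recursionWeight α h t * ξ h ≤ _
  calc γ' * ∑ h ∈ Icc τ t, recursionWeight α h t * ξ h
      ≤ γ' * ∑ h ∈ Icc τ t, recursionWeight α h t *
          (C * ((h : ℝ) + t₀) ^ (-(1 / 2 : ℝ)) + C' * ((h : ℝ) + t₀) ^ (-1 : ℝ)) := by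
        gcongr with h hh
        · exact hβ h t
        · rw [← div_sqrt_add_div_eq (by positivity)]
          exact hξ h (mem_Icc.mp hh).1 (mem_Icc.mp hh).2
    _ = κ * (C * (κ * ∑ h ∈ Icc τ t, recursionWeight α h t * ((h : ℝ) + t₀) ^ (-(1 / 2 : ℝ))) +
          C' * (κ * ∑ h ∈ Icc τ t, recursionWeight α h t * ((h : ℝ) + t₀) ^ (-1 : ℝ))) := by
        simp only [mul_sum, ← sum_add_distrib]
        rw [← Real.mul_self_sqrt hγ₀.le]
        exact sum_congr rfl fun _ _ => by ring
    _ ≤ κ * (C * ((t : ℝ) + 1 + t₀) ^ (-(1 / 2 : ℝ)) + C' * ((t : ℝ) + 1 + t₀) ^ (-1 : ℝ)) := by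
        gcongr <;> exact mul_sum_recursionWeight_rpow_le hH ht₀₀ hHt₀ (by norm_num) ht
    _ = κ * (C / √((t : ℝ) + 1 + t₀) + C' / ((t : ℝ) + 1 + t₀)) := by
        rw [div_sqrt_add_div_eq (by positivity)]

/-- Combination of Lemma 3 with exponents `Γ = 1/2` and `Γ = 1`:
if `ξ_h ≤ C/√(h+t₀) + C'/(h+t₀)` for `τ ≤ h ≤ t`, then the weighted sum
`γ' ∑_{h=τ}^{t} β̃_{h,t} ξ_h` is bounded by `√γ' (C/√(t+1+t₀) + C'/(t+1+t₀))`,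
where `β̃_{h,t} = α_h ∏_{l=h+1}^{t} (1 - α_l)` and `α_l = H/(l+t₀)`. -/
theorem stmt_12 (γ' H t₀ C C' : ℝ) (τ : ℕ)
    (hγ' : γ' ∈ Set.Ioo (0 : ℝ) 1)
    (hH : 1 ≤ H * (1 - Real.sqrt γ'))
    (ht₀ : max (2 * H) 1 ≤ t₀)
    (hC : 0 ≤ C) (hC' : 0 ≤ C')
    (t : ℕ) (ht : τ ≤ t)
    (ξ : ℕ → ℝ) (hξnn : ∀ h, τ ≤ h → h ≤ t → 0 ≤ ξ h)
    (hξ : ∀ h, τ ≤ h → h ≤ t →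
      ξ h ≤ C / Real.sqrt ((h : ℝ) + t₀) + C' / ((h : ℝ) + t₀)) :
    γ' * ∑ h ∈ Finset.Icc τ t,
        ((H / ((h : ℝ) + t₀)) * ∏ l ∈ Finset.Icc (h + 1) t, (1 - H / ((l : ℝ) + t₀))) * ξ h ≤
      Real.sqrt γ' *
        (C / Real.sqrt ((t : ℝ) + 1 + t₀) + C' / ((t : ℝ) + 1 + t₀)) :=
  stmt_12_general γ' H t₀ C C' τ hγ' hH ht₀ hC hC' t ht ξ hξ
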